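/- Let (T,σ) be a leaf-colored tree explaining the BMG (𝔾,σ), and let uv be an inner edge of T with v a child of u. If σ(L(T(v))) ∩ σ(L(T(v'))) = ∅ for every other child v' of u, then the edge uv is redundant, i.e., the tree obtained by contracting uv still explains (𝔾,σ). -/

import Mathlib

/-- A finite rooted tree, given by a parent function: every vertex reaches the
root along the parent chain. -/
structure PTree (V : Type*) where
  parent : V → Option V
  root : V
  root_parent : parent root = none
  connected : ∀ v : V, Relation.ReflTransGen (fun a b => parent a = some b) v root

namespace PTree

variable {V C : Type*}

/-- `T.anc a b` : `b` is an ancestor of `a` (i.e. `a ⪯ b` in the ancestor order). -/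
def anc (T : PTree V) (a b : V) : Prop :=
  Relation.ReflTransGen (fun x y => T.parent x = some y) a b

/-- `v` is a child of `u`. -/
def child (T : PTree V) (v u : V) : Prop := T.parent v = some u

/-- A leaf is a vertex without children. -/
def isLeaf (T : PTree V) (v : V) : Prop := ∀ w, ¬ T.child w v

/-- `u` is the last common ancestor of `x` and `y`. -/
def isLCA (T : PTree V) (u x y : V) : Prop :=
  T.anc x u ∧ T.anc y u ∧ ∀ w, T.anc x w → T.anc y w → T.anc u w

/-- `σ(L(T(v)))` : the set of colors of the leaves of the subtree rooted at `v`. -/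
def leafColors (T : PTree V) (σ : V → C) (v : V) : Set C :=
  {c | ∃ x, T.isLeaf x ∧ T.anc x v ∧ σ x = c}

/-- `y` is a best match of `x` in `(T,σ)`. -/
def bestMatch (T : PTree V) (σ : V → C) (x y : V) : Prop :=
  T.isLeaf x ∧ T.isLeaf y ∧ σ x ≠ σ y ∧
    ∀ y', T.isLeaf y' → σ y' = σ y →
      ∀ u u', T.isLCA u x y → T.isLCA u' x y' → T.anc u u'

/-- `x` and `y` are reciprocal best matches, i.e. `xy` is an edge of the BMG `G(T,σ)`. -/
def edge (T : PTree V) (σ : V → C) (x y : V) : Prop :=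
  T.bestMatch σ x y ∧ T.bestMatch σ y x

/-- Every inner vertex (other than the planted root) has exactly two children. -/
def Binary (T : PTree V) : Prop :=
  ∀ u : V, u ≠ T.root → ¬ T.isLeaf u →
    ∃ v₁ v₂, v₁ ≠ v₂ ∧ T.child v₁ u ∧ T.child v₂ u ∧
      ∀ w, T.child w u → w = v₁ ∨ w = v₂

/-- Adjacency in the color-set intersection graph `𝔠_T(u)`. -/
def csiAdj (T : PTree V) (σ : V → C) (u a b : V) : Prop :=
  a ≠ b ∧ T.child a u ∧ T.child b u ∧ (T.leafColors σ a ∩ T.leafColors σ b).Nonempty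

/-- `a` and `b` lie in the same connected component of `𝔠_T(u)`. -/
def sameComp (T : PTree V) (σ : V → C) (u a b : V) : Prop :=
  Relation.ReflTransGen (T.csiAdj σ u) a b

/-- `S` is a connected component of `𝔠_T(u)` with more than one element. -/
def IsBigComp (T : PTree V) (σ : V → C) (u : V) (S : Set V) : Prop :=
  (∃ a, T.child a u ∧ S = {b | T.sameComp σ u a b}) ∧ ∃ a ∈ S, ∃ b ∈ S, a ≠ b

end PTree

/-- `(T, σT)` explains the colored digraph `(E, σ)` on the gene set `L`, with
`ι` identifying the genes with the leaves of `T`. -/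
def Explains {V L C : Type*} (T : PTree V) (ι : L → V) (σT : V → C) (σ : L → C)
    (E : L → L → Prop) : Prop :=
  Function.Injective ι ∧ (∀ l, T.isLeaf (ι l)) ∧ (∀ v, T.isLeaf v → ∃ l, ι l = v) ∧
    (∀ l, σT (ι l) = σ l) ∧ ∀ x y, E x y ↔ T.bestMatch σT (ι x) (ι y)

/-- The parent function after contracting the edge `uv` (with `v` a child of `u`). -/
def contractedParent {V : Type*} [DecidableEq V] (T : PTree V) (u v w : V) : Option V :=
  (T.parent w).map (fun p => if p = v then u else p)

/-- One step towards the contracted parent when contracting all edges whose lower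
endpoints form the set `A`. -/
def multiContractStep {V : Type*} (T : PTree V) (A : Set V) (a b : V) : Prop :=
  T.parent a = some b ∧ b ∈ A

/-- Event types for inner vertices of an event-labeled gene tree. -/
inductive Event : Type
  | speciation
  | duplication

namespace PTree

variable {V C : Type*}

lemma ru (T : PTree V) : Relator.RightUnique (fun a b : V => T.parent a = some b) := by
  intro a b c h1 h2
  rw [h1] at h2
  exact Option.some.inj h2

lemma anc_total (T : PTree V) {x a b : V} (ha : T.anc x a) (hb : T.anc x b) :
    T.anc a b ∨ T.anc b a :=
  Relation.ReflTransGen.total_of_right_unique T.ru ha hb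

lemma no_cycle (T : PTree V) {a : V} :
    ¬ Relation.TransGen (fun x y => T.parent x = some y) a a := by
  have h := T.connected a
  induction h using Relation.ReflTransGen.head_induction_on with
  | refl =>
    intro hc
    obtain ⟨b, hb, -⟩ := Relation.TransGen.head'_iff.mp hc
    rw [T.root_parent] at hb
    exact absurd hb (by simp)
  | @head x y hxy hyr ih =>
    intro hc
    obtain ⟨b, hb, hbx⟩ := Relation.TransGen.head'_iff.mp hc
    have : b = y := T.ru hb hxy
    subst this
    exact ih (Relation.TransGen.tail' hbx hxy)

lemma anc_antisymm (T : PTree V) {a b : V} (h1 : T.anc a b) (h2 : T.anc b a) : a = b := by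
  rcases Relation.reflTransGen_iff_eq_or_transGen.mp h1 with rfl | ht
  · rfl
  · exact absurd (Relation.TransGen.trans_left ht h2) T.no_cycle

lemma exists_lca (T : PTree V) (x y : V) : ∃ z, T.isLCA z x y := by
  classical
  have key : ∀ b : V, T.anc x b → (T.anc y b → ∃ z, T.isLCA z x y) := by
    intro b hb
    induction hb with
    | refl =>
      intro hyx
      exact ⟨x, Relation.ReflTransGen.refl, hyx, fun w hw _ => hw⟩
    | @tail b c hxb hbc ih =>
      intro hyc
      by_cases hyb : T.anc y b
      · exact ih hyb
      · refine ⟨c, hxb.tail hbc, hyc, ?_⟩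
        intro w hxw hyw
        rcases T.anc_total hxb hxw with hbw | hwb
        · rcases hbw.cases_head with heq | ⟨d, hbd, hdw⟩
          · exact absurd (heq ▸ hyw) hyb
          · have : d = c := T.ru hbd hbc
            exact this ▸ hdw
        · exact absurd (hyw.trans hwb) hyb
  exact key T.root (T.connected x) (T.connected y)

end PTree

/-- The map collapsing `v` to `u` on vertices. -/
def gmap {V : Type*} [DecidableEq V] (u v : V) (h : u ≠ v) (a : V) : {w : V // w ≠ v} :=
  if ha : a = v then ⟨u, h⟩ else ⟨a, ha⟩

lemma gmap_v {V : Type*} [DecidableEq V] (u v : V) (h : u ≠ v) :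
    gmap u v h v = ⟨u, h⟩ := by simp [gmap]

lemma gmap_ne {V : Type*} [DecidableEq V] (u v : V) (h : u ≠ v) (a : V) (ha : a ≠ v) :
    gmap u v h a = ⟨a, ha⟩ := by simp [gmap, ha]

lemma gmap_sub {V : Type*} [DecidableEq V] (u v : V) (h : u ≠ v) (z : {w : V // w ≠ v}) :
    gmap u v h z.1 = z := by simp [gmap, z.2]

/-- If `uv` is an inner edge of `T` (with `v` a child of `u`) and
`σ(L(T(v)))` is disjoint from `σ(L(T(v')))` for every other child `v'` of `u`,
then contracting `uv` yields a tree that explains the same BMG. -/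
theorem stmt_5 {V C : Type*} [Fintype V] [DecidableEq V] (T : PTree V)
    (σ : V → C) (u v : V) (huv : T.child v u)
    (hv_inner : ¬ T.isLeaf v) (hu_root : u ≠ T.root)
    (hdisj : ∀ v', T.child v' u → v' ≠ v → T.leafColors σ v ∩ T.leafColors σ v' = ∅)
    (T' : PTree {w : V // w ≠ v})
    (hT' : ∀ w : {w : V // w ≠ v},
      (T'.parent w).map Subtype.val = contractedParent T u v w.1) :
    (∀ w : V, T.isLeaf w ↔ ∃ h : w ≠ v, T'.isLeaf ⟨w, h⟩) ∧
      ∀ x y : V, T.bestMatch σ x y ↔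
        ∃ (hx : x ≠ v) (hy : y ≠ v),
          T'.bestMatch (fun z => σ z.1) ⟨x, hx⟩ ⟨y, hy⟩ := by
  classical
  have hPu : T.parent v = some u := huv
  have hune : u ≠ v := by
    intro h
    exact T.no_cycle (Relation.TransGen.single (show T.parent v = some v from h ▸ hPu))
  set g : V → {w : V // w ≠ v} := gmap u v hune with hgdef
  have hgv : g v = ⟨u, hune⟩ := gmap_v u v hune
  have hgne : ∀ (a : V) (h : a ≠ v), g a = ⟨a, h⟩ := gmap_ne u v hune
  have hgsub : ∀ z : {w : V // w ≠ v}, g z.1 = z := gmap_sub u v hune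
  -- one step in T gives a step in T'
  have hstep' : ∀ (a : {w : V // w ≠ v}) (p : V), T.parent a.1 = some p →
      T'.parent a = some (g p) := by
    intro a p hp
    have h := hT' a
    rw [contractedParent, hp, Option.map_some] at h
    obtain ⟨b, hb, hbv⟩ := Option.map_eq_some_iff.mp h
    rw [hb]
    congr 1
    apply Subtype.ext
    rw [hbv]
    by_cases hpv : p = v
    · rw [hgdef, hpv, gmap_v, if_pos rfl]
    · rw [hgdef, gmap_ne u v hune p hpv, if_neg hpv]
  -- a step in T' comes from one or two steps in T
  have hstep'' : ∀ (a b : {w : V // w ≠ v}), T'.parent a = some b →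
      T.parent a.1 = some b.1 ∨ (T.parent a.1 = some v ∧ b.1 = u) := by
    intro a b hab
    have h := hT' a
    rw [hab, Option.map_some, contractedParent] at h
    cases hpa : T.parent a.1 with
    | none => rw [hpa] at h; exact absurd h (by simp)
    | some p =>
      rw [hpa, Option.map_some] at h
      have hb1 : b.1 = if p = v then u else p := Option.some.inj h
      by_cases hpv : p = v
      · right
        refine ⟨by rw [← hpv], ?_⟩
        rwa [if_pos hpv] at hb1
      · left
        rw [if_neg hpv] at hb1
        exact congrArg some hb1.symm
  -- ancestry transfers to T'
  have hA : ∀ a b : V, T.anc a b → T'.anc (g a) (g b) := by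
    intro a b h
    induction h using Relation.ReflTransGen.head_induction_on with
    | refl => exact Relation.ReflTransGen.refl
    | @head a' c hac hcb ih =>
      by_cases hav : a' = v
      · have hcu : c = u := by
          subst hav
          exact T.ru hac hPu
        have : g a' = g c := by rw [hav, hgv, hcu, hgne u hune]
        rw [this]
        exact ih
      · refine Relation.ReflTransGen.head ?_ ih
        show T'.parent (g a') = some (g c)
        rw [hgne a' hav]
        exact hstep' ⟨a', hav⟩ c hac
  -- ancestry transfers back to T
  have hB : ∀ a b : {w : V // w ≠ v}, T'.anc a b → T.anc a.1 b.1 := by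
    intro a b h
    induction h using Relation.ReflTransGen.head_induction_on with
    | refl => exact Relation.ReflTransGen.refl
    | @head a' c hac hcb ih =>
      rcases hstep'' a' c hac with h1 | ⟨h1, h2⟩
      · exact Relation.ReflTransGen.head h1 ih
      · refine Relation.ReflTransGen.head h1 (Relation.ReflTransGen.head ?_ ih)
        show T.parent v = some c.1
        rw [h2]
        exact hPu
  have hvup : ∀ b : V, T.anc v b → b ≠ v → T.anc u b := by
    intro b h hb
    rcases h.cases_head with heq | ⟨c, hc, hcb⟩
    · exact absurd heq.symm hb
    · have : c = u := T.ru hc hPu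
      exact this ▸ hcb
  -- LCA transfers to T'
  have hC : ∀ (w x y : V) (hx : x ≠ v) (hy : y ≠ v), T.isLCA w x y →
      T'.isLCA (g w) ⟨x, hx⟩ ⟨y, hy⟩ := by
    rintro w x y hx hy ⟨h1, h2, h3⟩
    refine ⟨?_, ?_, ?_⟩
    · have h := hA x w h1
      rwa [hgne x hx] at h
    · have h := hA y w h2
      rwa [hgne y hy] at h
    · intro z hz1 hz2
      have h4 := h3 z.1 (hB _ _ hz1) (hB _ _ hz2)
      have h5 := hA w z.1 h4
      rwa [hgsub] at h5
  have hanti' : ∀ a b : {w : V // w ≠ v}, T'.anc a b → T'.anc b a → a = b :=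
    fun a b h1 h2 => Subtype.ext (T.anc_antisymm (hB _ _ h1) (hB _ _ h2))
  -- LCA transfers back
  have hD : ∀ (w : {w : V // w ≠ v}) (x y : V) (hx : x ≠ v) (hy : y ≠ v),
      T'.isLCA w ⟨x, hx⟩ ⟨y, hy⟩ → ∃ z, T.isLCA z x y ∧ g z = w := by
    intro w x y hx hy hw
    obtain ⟨z, hz⟩ := T.exists_lca x y
    have h1 := hC z x y hx hy hz
    exact ⟨z, hz, hanti' _ _ (h1.2.2 w hw.1 hw.2.1) (hw.2.2 (g z) h1.1 h1.2.1)⟩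
  -- leaves
  have hleafne : ∀ w : V, T.isLeaf w → w ≠ v := fun w hw h => hv_inner (h ▸ hw)
  obtain ⟨c0, hc0⟩ : ∃ c, T.child c v := by
    by_contra h
    push_neg at h
    exact hv_inner h
  have hc0v : c0 ≠ v := by
    intro h
    exact hune (T.ru (h ▸ hc0) hPu).symm
  have hLf : ∀ (w : V) (hw : T.isLeaf w) (h : w ≠ v), T'.isLeaf ⟨w, h⟩ := by
    intro w hw h a ha
    rcases hstep'' a ⟨w, h⟩ ha with h1 | ⟨h1, h2⟩
    · exact hw a.1 h1
    · have h2' : w = u := h2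
      exact hw v (show T.parent v = some w by rw [h2']; exact hPu)
  have hLb : ∀ (w : V) (h : w ≠ v), T'.isLeaf ⟨w, h⟩ → T.isLeaf w := by
    intro w h hw a ha
    by_cases hav : a = v
    · have hwu : w = u := T.ru (show T.parent v = some w from hav ▸ ha) hPu
      refine hw ⟨c0, hc0v⟩ ?_
      show T'.parent ⟨c0, hc0v⟩ = some ⟨w, h⟩
      have hs := hstep' ⟨c0, hc0v⟩ v hc0
      rw [hgv] at hs
      rw [hs]
      congr 1
      exact Subtype.ext hwu.symm
    · refine hw ⟨a, hav⟩ ?_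
      show T'.parent ⟨a, hav⟩ = some ⟨w, h⟩
      have hs := hstep' ⟨a, hav⟩ w ha
      rwa [hgne w h] at hs
  constructor
  · intro w
    constructor
    · intro hw
      exact ⟨hleafne w hw, hLf w hw _⟩
    · rintro ⟨h, hw⟩
      exact hLb w h hw
  · intro x y
    constructor
    · rintro ⟨hxl, hyl, hσ, hbm⟩
      have hx := hleafne x hxl
      have hy := hleafne y hyl
      refine ⟨hx, hy, hLf x hxl hx, hLf y hyl hy, hσ, ?_⟩
      intro y' hy'l hσ' w w' hw hw'
      have hy'T : T.isLeaf y'.1 := hLb y'.1 y'.2 hy'l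
      obtain ⟨z, hz, hgz⟩ := hD w x y hx hy hw
      obtain ⟨z', hz', hgz'⟩ := hD w' x y'.1 hx y'.2 hw'
      have h5 := hbm y'.1 hy'T hσ' z z' hz hz'
      have h6 := hA z z' h5
      rwa [hgz, hgz'] at h6
    · rintro ⟨hx, hy, hxl', hyl', hσ, hbm⟩
      have hxl := hLb x hx hxl'
      have hyl := hLb y hy hyl'
      refine ⟨hxl, hyl, hσ, ?_⟩
      intro y' hy'l hσ' w w' hw hw'
      have hy'v : y' ≠ v := hleafne y' hy'l
      have h1 := hC w x y hx hy hw
      have h2 := hC w' x y' hx hy'v hw'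
      have h3 := hbm ⟨y', hy'v⟩ (hLf y' hy'l hy'v) hσ' (g w) (g w') h1 h2
      have h4 := hB _ _ h3
      by_cases hwv : w = v
      · by_cases hw'v : w' = v
        · rw [hwv, hw'v]
          exact Relation.ReflTransGen.refl
        · rw [hwv, hgv, hgne w' hw'v] at h4
          rw [hwv]
          exact Relation.ReflTransGen.head hPu h4
      · rw [hgne w hwv] at h4
        by_cases hw'v : w' = v
        · -- the hard case: the LCA of x,y' is v itself
          rcases T.anc_total hw.1 hw'.1 with hwv2 | hvw
          · exact hwv2
          · rw [hw'v, hgv] at h4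
            have hwu2 : T.anc w u := h4
            have hvw2 : T.anc v w := hw'v ▸ hvw
            have hwequ : w = u := by
              rcases hvw2.cases_head with heq | ⟨d, hd, hdw⟩
              · exact absurd heq.symm hwv
              · have hdu : d = u := T.ru hd hPu
                exact T.anc_antisymm hwu2 (hdu ▸ hdw)
            exfalso
            have hxv : T.anc x v := hw'v ▸ hw'.1
            have hyv : ¬ T.anc y v := by
              intro hyv2
              refine hwv (T.anc_antisymm (hw.2.2 v hxv hyv2) ?_)
              rw [hwequ]
              exact Relation.ReflTransGen.single hPu
            have hyu : y ≠ u := fun h => hyl v (show T.child v y by rw [h]; exact huv)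
            have hyw2 : T.anc y u := by rw [← hwequ]; exact hw.2.1
            rcases hyw2.cases_tail with heq | ⟨d, hyd, hdu⟩
            · exact hyu heq.symm
            · have hdv : d ≠ v := fun h => hyv (h ▸ hyd)
              have hcolor : σ y ∈ T.leafColors σ v ∩ T.leafColors σ d :=
                ⟨⟨y', hy'l, hw'v ▸ hw'.2.1, hσ'⟩, ⟨y, hyl, hyd, rfl⟩⟩
              rw [hdisj d hdu hdv] at hcolor
              exact hcolor
        · rwa [hgne w' hw'v] at h4
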